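/- arXiv:2509.13097 — 3 statements merged into one kernel-verified Lean document; each statement's English description precedes it below -/
import Mathlib

section
/- For every permutation σ of [n], the number of upper-crossings of σ equals the number of lower-crossings of θ̂(σ), and the number of lower-crossings of σ equals the number of upper-crossings of θ̂(σ). -/
namespace Paper

variable {n : ℕ}

/-- The 1-based position corresponding to `i : Fin n`. -/
def pv (i : Fin n) : ℕ := (i : ℕ) + 1

/-- The 1-based letter of the word `f` at 1-based position `k` (0 if out of range). -/
def valAt (f : Fin n → Fin n) (k : ℕ) : ℕ :=
  if h : 1 ≤ k ∧ k ≤ n then ((f ⟨k - 1, by omega⟩ : Fin n) : ℕ) + 1 else 0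

/-- The map θ̂ : the 1-based `i`-th letter of `hatTheta f` is `σ̂_{n+1-i}`,
where `σ̂ₐ = n - a` (1-based) if `a < n` and `n̂ = n`. (0-based encoding.) -/
def hatTheta (f : Fin n → Fin n) (i : Fin n) : Fin n :=
  if ((f i.rev : ℕ)) = n - 1 then f i.rev
  else ⟨n - 2 - (f i.rev : ℕ), by have := i.isLt; omega⟩

end Paper

namespace Paper

variable {n : ℕ}

/-- Ending-crossings: pairs (i,j) with i < j ≤ σᵢ < σⱼ = n (1-based). -/
def ecr (f : Fin n → Fin n) : ℕ :=
  (Finset.univ.filter (fun p : Fin n × Fin n =>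
    pv p.1 < pv p.2 ∧ pv p.2 ≤ valAt f (pv p.1) ∧
    valAt f (pv p.1) < valAt f (pv p.2) ∧ valAt f (pv p.2) = n)).card

/-- Upper-crossings: pairs (i,j) with i < j ≤ σᵢ < σⱼ < n (1-based). -/
def ucr (f : Fin n → Fin n) : ℕ :=
  (Finset.univ.filter (fun p : Fin n × Fin n =>
    pv p.1 < pv p.2 ∧ pv p.2 ≤ valAt f (pv p.1) ∧
    valAt f (pv p.1) < valAt f (pv p.2) ∧ valAt f (pv p.2) < n)).card

/-- Lower-crossings: pairs (i,j) with i > j > σᵢ > σⱼ (1-based). -/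
def lcr (f : Fin n → Fin n) : ℕ :=
  (Finset.univ.filter (fun p : Fin n × Fin n =>
    pv p.1 > pv p.2 ∧ pv p.2 > valAt f (pv p.1) ∧
    valAt f (pv p.1) > valAt f (pv p.2))).card

/-- Ending-nestings: pairs (i,j) with i < j ≤ σⱼ < σᵢ = n (1-based). -/
def ene (f : Fin n → Fin n) : ℕ :=
  (Finset.univ.filter (fun p : Fin n × Fin n =>
    pv p.1 < pv p.2 ∧ pv p.2 ≤ valAt f (pv p.2) ∧
    valAt f (pv p.2) < valAt f (pv p.1) ∧ valAt f (pv p.1) = n)).card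

/-- Upper-nestings: pairs (i,j) with i < j ≤ σⱼ < σᵢ < n (1-based). -/
def une (f : Fin n → Fin n) : ℕ :=
  (Finset.univ.filter (fun p : Fin n × Fin n =>
    pv p.1 < pv p.2 ∧ pv p.2 ≤ valAt f (pv p.2) ∧
    valAt f (pv p.2) < valAt f (pv p.1) ∧ valAt f (pv p.1) < n)).card

/-- Lower-nestings: pairs (i,j) with i > j > σⱼ > σᵢ (1-based). -/
def lne (f : Fin n → Fin n) : ℕ :=
  (Finset.univ.filter (fun p : Fin n × Fin n =>
    pv p.1 > pv p.2 ∧ pv p.2 > valAt f (pv p.2) ∧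
    valAt f (pv p.2) > valAt f (pv p.1))).card

/-- Variant ending-nestings: pairs (i,j) with σⱼ < j < i ≤ σᵢ = n (1-based). -/
def etne (f : Fin n → Fin n) : ℕ :=
  (Finset.univ.filter (fun p : Fin n × Fin n =>
    valAt f (pv p.2) < pv p.2 ∧ pv p.2 < pv p.1 ∧
    pv p.1 ≤ valAt f (pv p.1) ∧ valAt f (pv p.1) = n)).card

/-- The crossing number: #{(i,j) : i < j ≤ σᵢ < σⱼ} + #{(i,j) : i > j > σᵢ > σⱼ}. -/
def cros (f : Fin n → Fin n) : ℕ :=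
  (Finset.univ.filter (fun p : Fin n × Fin n =>
    pv p.1 < pv p.2 ∧ pv p.2 ≤ valAt f (pv p.1) ∧
    valAt f (pv p.1) < valAt f (pv p.2))).card
  + lcr f

/-- The nesting number: #{(i,j) : i < j ≤ σⱼ < σᵢ} + #{(i,j) : i > j > σⱼ > σᵢ}. -/
def nest (f : Fin n → Fin n) : ℕ :=
  (Finset.univ.filter (fun p : Fin n × Fin n =>
    pv p.1 < pv p.2 ∧ pv p.2 ≤ valAt f (pv p.2) ∧
    valAt f (pv p.2) < valAt f (pv p.1))).card
  + lne f

end Paper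

namespace Paper

lemma valAt_pv (f : Fin n → Fin n) (k : Fin n) : valAt f (pv k) = (f k : ℕ) + 1 := by
  have hk := k.isLt
  rw [valAt, dif_pos (by simp only [pv]; omega)]
  simp only [pv]
  have : (⟨(k : ℕ) + 1 - 1, by omega⟩ : Fin n) = k := by ext; simp
  rw [this]

lemma valAt_hatTheta (f : Fin n → Fin n) (k : Fin n) :
    valAt (hatTheta f) (pv k) =
      if valAt f (pv k.rev) = n then n else n - valAt f (pv k.rev) := by
  have h1 := (f k.rev).isLt
  have hk := k.isLt
  simp only [valAt_pv, hatTheta]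
  split_ifs <;> simp_all <;> omega

/-- θ̂ exchanges upper-crossings and lower-crossings. -/
theorem ucr_lcr_hatTheta (n : ℕ) (σ : Equiv.Perm (Fin n)) :
    ucr ⇑σ = lcr (hatTheta ⇑σ) ∧ lcr ⇑σ = ucr (hatTheta ⇑σ) := by
  have key : ∀ p : Fin n × Fin n,
      ((pv p.1 < pv p.2 ∧ pv p.2 ≤ valAt (⇑σ) (pv p.1) ∧
        valAt (⇑σ) (pv p.1) < valAt (⇑σ) (pv p.2) ∧ valAt (⇑σ) (pv p.2) < n)
      ↔ (pv p.1.rev > pv p.2.rev ∧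
         pv p.2.rev > valAt (hatTheta ⇑σ) (pv p.1.rev) ∧
         valAt (hatTheta ⇑σ) (pv p.1.rev) > valAt (hatTheta ⇑σ) (pv p.2.rev))) := by
    intro p
    have h1 := p.1.isLt
    have h2 := p.2.isLt
    have v1 := (σ p.1).isLt
    have v2 := (σ p.2).isLt
    rw [valAt_hatTheta, valAt_hatTheta, Fin.rev_rev, Fin.rev_rev]
    simp only [valAt_pv]
    simp only [pv, Fin.val_rev]
    split_ifs <;> omega
  have key2 : ∀ p : Fin n × Fin n,
      ((pv p.1 > pv p.2 ∧ pv p.2 > valAt (⇑σ) (pv p.1) ∧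
        valAt (⇑σ) (pv p.1) > valAt (⇑σ) (pv p.2))
      ↔ (pv p.1.rev < pv p.2.rev ∧
         pv p.2.rev ≤ valAt (hatTheta ⇑σ) (pv p.1.rev) ∧
         valAt (hatTheta ⇑σ) (pv p.1.rev) < valAt (hatTheta ⇑σ) (pv p.2.rev) ∧
         valAt (hatTheta ⇑σ) (pv p.2.rev) < n)) := by
    intro p
    have h1 := p.1.isLt
    have h2 := p.2.isLt
    have v1 := (σ p.1).isLt
    have v2 := (σ p.2).isLt
    rw [valAt_hatTheta, valAt_hatTheta, Fin.rev_rev, Fin.rev_rev]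
    simp only [valAt_pv]
    simp only [pv, Fin.val_rev]
    split_ifs <;> omega
  constructor
  · unfold ucr lcr
    apply Finset.card_bij' (fun p _ => (p.1.rev, p.2.rev)) (fun p _ => (p.1.rev, p.2.rev))
    · intro p _; simp
    · intro p _; simp
    · intro p hp
      simp only [Finset.mem_filter, Finset.mem_univ, true_and] at hp ⊢
      exact (key p).mp hp
    · intro p hp
      simp only [Finset.mem_filter, Finset.mem_univ, true_and] at hp ⊢
      have h := key (p.1.rev, p.2.rev)
      simp only [Fin.rev_rev] at h
      exact h.mpr hp
  · unfold ucr lcr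
    apply Finset.card_bij' (fun p _ => (p.1.rev, p.2.rev)) (fun p _ => (p.1.rev, p.2.rev))
    · intro p _; simp
    · intro p _; simp
    · intro p hp
      simp only [Finset.mem_filter, Finset.mem_univ, true_and] at hp ⊢
      exact (key2 p).mp hp
    · intro p hp
      simp only [Finset.mem_filter, Finset.mem_univ, true_and] at hp ⊢
      have h := key2 (p.1.rev, p.2.rev)
      simp only [Fin.rev_rev] at h
      exact h.mpr hp

end Paper
end

section
/- For every permutation π of [n], the pattern counts satisfy 213̲(π) = 231̲(π) − |Aba(π)| + |Dtb(π)|, where the underlined pair must be adjacent. -/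
namespace Paper

variable {n : ℕ}

/-- 2\underline{13}(σ) = #{(ℓ,j) : σ⁻¹(ℓ) < j < n, σⱼ < ℓ < σ_{j+1}} (1-based). -/
def stat2_13 (σ : Equiv.Perm (Fin n)) : ℕ :=
  (Finset.univ.filter (fun p : Fin n × Fin n =>
    pv (σ.symm p.1) < pv p.2 ∧ pv p.2 < n ∧
    valAt ⇑σ (pv p.2) < pv p.1 ∧ pv p.1 < valAt ⇑σ (pv p.2 + 1))).card

/-- 2\underline{31}(σ) = #{(ℓ,j) : σ⁻¹(ℓ) < j < n, σ_{j+1} < ℓ < σⱼ} (1-based). -/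
def stat2_31 (σ : Equiv.Perm (Fin n)) : ℕ :=
  (Finset.univ.filter (fun p : Fin n × Fin n =>
    pv (σ.symm p.1) < pv p.2 ∧ pv p.2 < n ∧
    valAt ⇑σ (pv p.2 + 1) < pv p.1 ∧ pv p.1 < valAt ⇑σ (pv p.2))).card

/-- \underline{31}2(σ) = #{(ℓ,j) : 1 < j < σ⁻¹(ℓ), σⱼ < ℓ < σ_{j-1}} (1-based). -/
def stat31_2 (σ : Equiv.Perm (Fin n)) : ℕ :=
  (Finset.univ.filter (fun p : Fin n × Fin n =>
    1 < pv p.2 ∧ pv p.2 < pv (σ.symm p.1) ∧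
    valAt ⇑σ (pv p.2) < pv p.1 ∧ pv p.1 < valAt ⇑σ (pv p.2 - 1))).card

/-- \underline{13}2(σ) = #{(ℓ,j) : 1 < j < σ⁻¹(ℓ), σ_{j-1} < ℓ < σⱼ} (1-based). -/
def stat13_2 (σ : Equiv.Perm (Fin n)) : ℕ :=
  (Finset.univ.filter (fun p : Fin n × Fin n =>
    1 < pv p.2 ∧ pv p.2 < pv (σ.symm p.1) ∧
    valAt ⇑σ (pv p.2 - 1) < pv p.1 ∧ pv p.1 < valAt ⇑σ (pv p.2))).card

end Paper

namespace Paper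

variable {n : ℕ}

/-- Aba(π) = {πᵢ : πₙ < πᵢ < π_{i+1}}, the set of ascent bottoms exceeding the last letter. -/
def Aba (f : Fin n → Fin n) : Finset (Fin n) :=
  (Finset.univ.filter (fun i : Fin n =>
    valAt f n < valAt f (pv i) ∧ valAt f (pv i) < valAt f (pv i + 1))).image f

/-- Dtb(π) = {πᵢ : π_{i+1} < πᵢ < πₙ}, the set of descent tops below the last letter. -/
def Dtb (f : Fin n → Fin n) : Finset (Fin n) :=
  (Finset.univ.filter (fun i : Fin n =>
    valAt f (pv i + 1) < valAt f (pv i) ∧ valAt f (pv i) < valAt f n)).image f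

/-- Telescoping: walking along positions `lo, lo+1, …, m` with all values `≠ L`,
the number of upward crossings of level `L` minus downward crossings is determined
by whether the first and last values lie above `L`. -/
lemma telescope (g : ℕ → ℕ) (L lo : ℕ) (hlo : 1 ≤ lo) (m : ℕ) (hm : lo ≤ m)
    (hne : ∀ p, lo ≤ p → p ≤ m → g p ≠ L) :
    ((Finset.Icc lo (m - 1)).filter (fun p => g p < L ∧ L < g (p + 1))).card
      + (if L < g lo then 1 else 0)
    = ((Finset.Icc lo (m - 1)).filter (fun p => g (p + 1) < L ∧ L < g p)).card
      + (if L < g m then 1 else 0) := by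
  induction m, hm using Nat.le_induction with
  | base =>
      rw [Finset.Icc_eq_empty (by omega)]
      simp
  | succ m hm ih =>
      have ih' := ih (fun p h1 h2 => hne p h1 (by omega))
      have h1 : g m ≠ L := hne m hm (by omega)
      have h2 : g (m + 1) ≠ L := hne (m + 1) (by omega) le_rfl
      have hIcc : Finset.Icc lo (m + 1 - 1) = insert m (Finset.Icc lo (m - 1)) := by
        ext p
        simp only [Finset.mem_Icc, Finset.mem_insert]
        omega
      have hmem : m ∉ Finset.Icc lo (m - 1) := by
        simp only [Finset.mem_Icc]; omega
      have cu : ((insert m (Finset.Icc lo (m - 1))).filter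
            (fun p => g p < L ∧ L < g (p + 1))).card
          = ((Finset.Icc lo (m - 1)).filter (fun p => g p < L ∧ L < g (p + 1))).card
            + (if g m < L ∧ L < g (m + 1) then 1 else 0) := by
        rw [Finset.filter_insert]
        split_ifs with h
        · rw [Finset.card_insert_of_notMem (fun hc => hmem (Finset.mem_filter.mp hc).1)]
        · simp
      have cd : ((insert m (Finset.Icc lo (m - 1))).filter
            (fun p => g (p + 1) < L ∧ L < g p)).card
          = ((Finset.Icc lo (m - 1)).filter (fun p => g (p + 1) < L ∧ L < g p)).card
            + (if g (m + 1) < L ∧ L < g m then 1 else 0) := by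
        rw [Finset.filter_insert]
        split_ifs with h
        · rw [Finset.card_insert_of_notMem (fun hc => hmem (Finset.mem_filter.mp hc).1)]
        · simp
      rw [hIcc, cu, cd]
      split_ifs at ih' ⊢ <;> omega

/-- Reindexing a range-sum of indicators as the cardinality of a filtered interval. -/
lemma sum_shift (n a : ℕ) (Q : ℕ → Prop) [DecidablePred Q] :
    (∑ j ∈ Finset.range n, if a < j ∧ j + 1 < n ∧ Q (j + 1) then 1 else 0)
    = ((Finset.Icc (a + 2) (n - 1)).filter Q).card := by
  rw [← Finset.card_filter]
  refine Finset.card_bij' (fun j _ => j + 1) (fun p _ => p - 1) ?_ ?_ ?_ ?_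
  · intro x hx
    simp only [Finset.mem_filter, Finset.mem_range] at hx
    simp only [Finset.mem_filter, Finset.mem_Icc]
    exact ⟨⟨by omega, by omega⟩, hx.2.2.2⟩
  · intro x hx
    simp only [Finset.mem_filter, Finset.mem_Icc] at hx
    simp only [Finset.mem_filter, Finset.mem_range]
    have e : x - 1 + 1 = x := by omega
    rw [e]
    exact ⟨by omega, by omega, by omega, hx.2⟩
  · intro x hx
    show x + 1 - 1 = x
    omega
  · intro x hx
    simp only [Finset.mem_filter, Finset.mem_Icc] at hx
    show x - 1 + 1 = x
    omega

/-- Per-letter identity: for a word `g` (1-based values at positions `1..n`) with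
`g (a+1) = L` and `g p ≠ L` for `p ∈ [a+2, n]`, the up-crossing count plus the
"ascent-bottom" indicator equals the down-crossing count plus the "descent-top"
indicator. -/
lemma key (g : ℕ → ℕ) (L a n : ℕ) (ha : a < n) (hL : g (a + 1) = L)
    (hne : ∀ p, a + 2 ≤ p → p ≤ n → g p ≠ L) :
    (∑ j ∈ Finset.range n,
        if a < j ∧ j + 1 < n ∧ g (j + 1) < L ∧ L < g (j + 1 + 1) then 1 else 0)
      + (if g n < L ∧ L < g (a + 1 + 1) then 1 else 0)
    = (∑ j ∈ Finset.range n,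
        if a < j ∧ j + 1 < n ∧ g (j + 1 + 1) < L ∧ L < g (j + 1) then 1 else 0)
      + (if g (a + 1 + 1) < L ∧ L < g n then 1 else 0) := by
  by_cases hcase : a + 2 ≤ n
  · have tel := telescope g L (a + 2) (by omega) n (by omega)
      (fun p h1 h2 => hne p h1 h2)
    have s1 : (∑ j ∈ Finset.range n,
          if a < j ∧ j + 1 < n ∧ g (j + 1) < L ∧ L < g (j + 1 + 1) then 1 else 0)
        = ((Finset.Icc (a + 2) (n - 1)).filter (fun p => g p < L ∧ L < g (p + 1))).card :=
      sum_shift n a (fun p => g p < L ∧ L < g (p + 1))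
    have s2 : (∑ j ∈ Finset.range n,
          if a < j ∧ j + 1 < n ∧ g (j + 1 + 1) < L ∧ L < g (j + 1) then 1 else 0)
        = ((Finset.Icc (a + 2) (n - 1)).filter (fun p => g (p + 1) < L ∧ L < g p)).card :=
      sum_shift n a (fun p => g (p + 1) < L ∧ L < g p)
    rw [s1, s2]
    have hA : g (a + 2) ≠ L := hne (a + 2) le_rfl hcase
    have hB : g n ≠ L := hne n hcase le_rfl
    have e2 : a + 1 + 1 = a + 2 := by omega
    rw [e2]
    split_ifs at tel ⊢ <;> omega
  · have hn : a + 1 = n := by omega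
    have z1 : (∑ j ∈ Finset.range n,
          if a < j ∧ j + 1 < n ∧ g (j + 1) < L ∧ L < g (j + 1 + 1) then 1 else 0) = 0 := by
      apply Finset.sum_eq_zero
      intro j hj
      have := Finset.mem_range.mp hj
      rw [if_neg (by omega)]
    have z2 : (∑ j ∈ Finset.range n,
          if a < j ∧ j + 1 < n ∧ g (j + 1 + 1) < L ∧ L < g (j + 1) then 1 else 0) = 0 := by
      apply Finset.sum_eq_zero
      intro j hj
      have := Finset.mem_range.mp hj
      rw [if_neg (by omega)]
    have hgn : g n = L := by rw [← hn]; exact hL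
    rw [z1, z2, if_neg (by omega), if_neg (by omega)]

/-- 2\underline{13}(π) = 2\underline{31}(π) − |Aba(π)| + |Dtb(π)|. -/
theorem stat2_13_eq (n : ℕ) (π : Equiv.Perm (Fin n)) :
    stat2_13 π + (Aba ⇑π).card = stat2_31 π + (Dtb ⇑π).card := by
  classical
  -- letter at 1-based position (i+1)
  have hval : ∀ i : Fin n, valAt ⇑π ((i : ℕ) + 1) = (π i : ℕ) + 1 := by
    intro i
    rw [valAt, dif_pos ⟨by omega, i.isLt⟩]
    simp
  have hvalL : ∀ ℓ : Fin n, valAt ⇑π ((π.symm ℓ : ℕ) + 1) = (ℓ : ℕ) + 1 := by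
    intro ℓ
    rw [hval (π.symm ℓ), Equiv.apply_symm_apply]
  have hne : ∀ ℓ : Fin n, ∀ p, (π.symm ℓ : ℕ) + 2 ≤ p → p ≤ n →
      valAt ⇑π p ≠ (ℓ : ℕ) + 1 := by
    intro ℓ p h1 h2 hc
    rw [valAt, dif_pos ⟨by omega, h2⟩] at hc
    have e1 : (π ⟨p - 1, by omega⟩ : Fin n) = ℓ := Fin.ext (by omega)
    have e2 := congrArg π.symm e1
    rw [Equiv.symm_apply_apply] at e2
    have e3 : p - 1 = (π.symm ℓ : ℕ) := congrArg Fin.val e2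
    omega
  have hs13 : stat2_13 π = ∑ ℓ : Fin n, ∑ j ∈ Finset.range n,
      if (π.symm ℓ : ℕ) < j ∧ j + 1 < n ∧
          valAt ⇑π (j + 1) < (ℓ : ℕ) + 1 ∧ (ℓ : ℕ) + 1 < valAt ⇑π (j + 1 + 1)
        then 1 else 0 := by
    rw [stat2_13, Finset.card_filter, Fintype.sum_prod_type]
    apply Finset.sum_congr rfl
    intro ℓ _
    rw [← Fin.sum_univ_eq_sum_range (fun j =>
      if (π.symm ℓ : ℕ) < j ∧ j + 1 < n ∧
          valAt ⇑π (j + 1) < (ℓ : ℕ) + 1 ∧ (ℓ : ℕ) + 1 < valAt ⇑π (j + 1 + 1)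
        then 1 else 0) n]
    apply Finset.sum_congr rfl
    intro j _
    simp only [pv, Nat.add_lt_add_iff_right]
  have hs31 : stat2_31 π = ∑ ℓ : Fin n, ∑ j ∈ Finset.range n,
      if (π.symm ℓ : ℕ) < j ∧ j + 1 < n ∧
          valAt ⇑π (j + 1 + 1) < (ℓ : ℕ) + 1 ∧ (ℓ : ℕ) + 1 < valAt ⇑π (j + 1)
        then 1 else 0 := by
    rw [stat2_31, Finset.card_filter, Fintype.sum_prod_type]
    apply Finset.sum_congr rfl
    intro ℓ _
    rw [← Fin.sum_univ_eq_sum_range (fun j =>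
      if (π.symm ℓ : ℕ) < j ∧ j + 1 < n ∧
          valAt ⇑π (j + 1 + 1) < (ℓ : ℕ) + 1 ∧ (ℓ : ℕ) + 1 < valAt ⇑π (j + 1)
        then 1 else 0) n]
    apply Finset.sum_congr rfl
    intro j _
    simp only [pv, Nat.add_lt_add_iff_right]
  have hA : (Aba ⇑π).card = ∑ ℓ : Fin n,
      if valAt ⇑π n < (ℓ : ℕ) + 1 ∧ (ℓ : ℕ) + 1 < valAt ⇑π ((π.symm ℓ : ℕ) + 1 + 1)
        then 1 else 0 := by
    rw [Aba, Finset.card_image_of_injective _ π.injective, Finset.card_filter]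
    rw [← Equiv.sum_comp π.symm (fun i : Fin n =>
      if valAt ⇑π n < valAt ⇑π (pv i) ∧ valAt ⇑π (pv i) < valAt ⇑π (pv i + 1)
        then 1 else 0)]
    apply Finset.sum_congr rfl
    intro ℓ _
    simp only [pv, hvalL ℓ]
  have hD : (Dtb ⇑π).card = ∑ ℓ : Fin n,
      if valAt ⇑π ((π.symm ℓ : ℕ) + 1 + 1) < (ℓ : ℕ) + 1 ∧ (ℓ : ℕ) + 1 < valAt ⇑π n
        then 1 else 0 := by
    rw [Dtb, Finset.card_image_of_injective _ π.injective, Finset.card_filter]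
    rw [← Equiv.sum_comp π.symm (fun i : Fin n =>
      if valAt ⇑π (pv i + 1) < valAt ⇑π (pv i) ∧ valAt ⇑π (pv i) < valAt ⇑π n
        then 1 else 0)]
    apply Finset.sum_congr rfl
    intro ℓ _
    simp only [pv, hvalL ℓ]
  rw [hs13, hs31, hA, hD, ← Finset.sum_add_distrib, ← Finset.sum_add_distrib]
  apply Finset.sum_congr rfl
  intro ℓ _
  exact key (valAt ⇑π) ((ℓ : ℕ) + 1) (π.symm ℓ : ℕ) n (π.symm ℓ).isLt (hvalL ℓ) (hne ℓ)

end Paper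
end

section
/- The vincular pattern statistics 2\underline{13} and 2\underline{31} are equidistributed on S_n. -/
namespace Paper

variable {n : ℕ}

lemma valAt_bounds (σ : Equiv.Perm (Fin n)) {k : ℕ} (h1 : 1 ≤ k) (h2 : k ≤ n) :
    1 ≤ valAt ⇑σ k ∧ valAt ⇑σ k ≤ n := by
  rw [valAt, dif_pos ⟨h1, h2⟩]
  have := (σ ⟨k - 1, by omega⟩).isLt
  omega

lemma valAt_rev (σ : Equiv.Perm (Fin n)) {k : ℕ} (h1 : 1 ≤ k) (h2 : k ≤ n) :
    valAt ⇑(Fin.revPerm * σ : Equiv.Perm (Fin n)) k = n + 1 - valAt ⇑σ k := by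
  rw [valAt, valAt, dif_pos ⟨h1, h2⟩, dif_pos ⟨h1, h2⟩]
  simp only [Equiv.Perm.mul_apply, Fin.revPerm_apply, Fin.val_rev]
  have := (σ ⟨k - 1, by omega⟩).isLt
  omega

lemma cond_iff (σ : Equiv.Perm (Fin n)) (p : Fin n × Fin n) :
    (pv (σ.symm p.1) < pv p.2 ∧ pv p.2 < n ∧
      valAt ⇑σ (pv p.2) < pv p.1 ∧ pv p.1 < valAt ⇑σ (pv p.2 + 1)) ↔
    (pv ((Fin.revPerm * σ).symm p.1.rev) < pv p.2 ∧ pv p.2 < n ∧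
      valAt ⇑(Fin.revPerm * σ : Equiv.Perm (Fin n)) (pv p.2 + 1) < pv p.1.rev ∧
      pv p.1.rev < valAt ⇑(Fin.revPerm * σ : Equiv.Perm (Fin n)) (pv p.2)) := by
  have hs : (Fin.revPerm * σ).symm p.1.rev = σ.symm p.1 := by
    rw [Equiv.symm_apply_eq]; simp
  rw [hs]
  by_cases h2 : pv p.2 < n
  · have hp2 : 1 ≤ pv p.2 := by simp [pv]
    have hb1 := valAt_bounds σ (k := pv p.2) hp2 (by omega)
    have hb2 := valAt_bounds σ (k := pv p.2 + 1) (by omega) (by omega)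
    rw [valAt_rev σ hp2 (by omega), valAt_rev σ (by omega) (by omega)]
    have hr : (p.1.rev : ℕ) = n - ((p.1 : ℕ) + 1) := Fin.val_rev p.1
    have hlt := p.1.isLt
    simp only [pv]
    omega
  · simp [h2]

lemma stat2_13_eq_s12 (σ : Equiv.Perm (Fin n)) :
    stat2_13 σ = stat2_31 (Fin.revPerm * σ) := by
  unfold stat2_13 stat2_31
  apply Finset.card_nbij' (fun p => (p.1.rev, p.2)) (fun p => (p.1.rev, p.2))
  · intro p hp
    simp only [Finset.mem_coe, Finset.mem_filter, Finset.mem_univ, true_and] at *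
    exact (cond_iff σ p).mp hp
  · intro p hp
    simp only [Finset.mem_coe, Finset.mem_filter, Finset.mem_univ, true_and] at *
    have h := cond_iff σ (p.1.rev, p.2)
    simp only [Fin.rev_rev] at h
    exact h.mpr hp
  · intro p _; simp [Fin.rev_rev]
  · intro p _; simp [Fin.rev_rev]

end Paper

namespace Paper

/-- 2\underline{13} and 2\underline{31} are equidistributed on Sₙ. -/
theorem equidistribution_213_231 (n : ℕ) (R : Type*) [CommSemiring R] (x : R) :
    ∑ σ : Equiv.Perm (Fin n), x ^ stat2_13 σ =
    ∑ σ : Equiv.Perm (Fin n), x ^ stat2_31 σ := by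
  exact Fintype.sum_equiv (Equiv.mulLeft Fin.revPerm) _ _
    (fun σ => by rw [stat2_13_eq_s12 σ]; rfl)

end Paper
end
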